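/- Let E₀, E₁ be Banach spaces with E₁ continuously and densely embedded in E₀, fix μ ∈ (0,1), an open set V_μ ⊆ E_μ, and let F₂ satisfy hypothesis (H2) with exponents β ∈ (μ,1), β_j ∈ [μ,β], ρ_j ≥ 0 (j = 1,…,m). Let x₀ ∈ V_μ and ε₀ > 0 be such that B̄_{E_μ}(x₀,ε₀) ⊆ V_μ, let T > 0, and let v ∈ 𝔼_{1,μ}([0,T]) satisfy v(t) ∈ B̄_{E_μ}(x₀,ε₀) for all t ∈ [0,T] (note v(t) ∈ E₁ ⊆ E_β for t ∈ (0,T], so F₂(v(t)) is defined). Then: (a) the map t ↦ F₂(v(t)) is continuous from (0,T] into E₀; (b) F₂∘v belongs to 𝔼_{0,μ}([0,T]) = BC_{1−μ}([0,T],E₀), i.e. t^{1−μ}‖F₂(v(t))‖_{E₀} is bounded on (0,T] and tends to 0 as t → 0⁺; (c) the norm ‖F₂∘v‖_{𝔼_{0,μ}([0,T′])} = sup_{t∈(0,T′]} t^{1−μ}‖F₂(v(t))‖_{E₀} tends to 0 as T′ → 0⁺. -/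

import Mathlib

open Set Filter
open scoped ENNReal

namespace QPE

variable {E : Type*} [NormedAddCommGroup E] [NormedSpace ℝ E]

/-- Continuity of `u` on `s ⊆ ℝ` with respect to the generalized norm `N` on `E`. -/
def NContOn (N : E → ℝ) (u : ℝ → E) (s : Set ℝ) : Prop :=
  ∀ t ∈ s, ∀ ε > 0, ∃ δ > 0, ∀ t' ∈ s, |t' - t| < δ → N (u t' - u t) < ε

/-- Uniform continuity of `u` on `s ⊆ ℝ` with respect to `N`. -/
def NUnifContOn (N : E → ℝ) (u : ℝ → E) (s : Set ℝ) : Prop :=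
  ∀ ε > 0, ∃ δ > 0, ∀ t ∈ s, ∀ t' ∈ s, |t' - t| < δ → N (u t' - u t) < ε

/-- `u ∈ BC_{1-μ}([0,T], X)` where the space `X` has carrier `S` and norm `N`:
continuity on `(0,T]`, boundedness of `t^{1-μ} N (u t)` and vanishing as `t → 0⁺`. -/
def MemBC (μ T : ℝ) (S : Set E) (N : E → ℝ) (u : ℝ → E) : Prop :=
  (∀ t ∈ Ioc (0:ℝ) T, u t ∈ S) ∧ NContOn N u (Ioc 0 T) ∧
    (∃ M : ℝ, ∀ t ∈ Ioc (0:ℝ) T, t ^ (1 - μ) * N (u t) ≤ M) ∧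
    Tendsto (fun t : ℝ => t ^ (1 - μ) * N (u t)) (nhdsWithin 0 (Ioi 0)) (nhds 0)

/-- `u ∈ 𝔼_{1,μ}([0,T]) = BC¹_{1-μ}([0,T],E₀) ∩ BC_{1-μ}([0,T],E₁)`,
with derivative `u'` (taken in the ambient space `E₀ = E`). -/
def MemE1 (μ T : ℝ) (S₁ : Set E) (N₁ : E → ℝ) (u u' : ℝ → E) : Prop :=
  (∀ t ∈ Ioc (0:ℝ) T, HasDerivAt u (u' t) t) ∧
    MemBC μ T univ (fun x => ‖x‖) u ∧ MemBC μ T univ (fun x => ‖x‖) u' ∧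
    MemBC μ T S₁ N₁ u

/-- The norm of `𝔼_{1,μ}([0,T])`. -/
noncomputable def normE1 (μ T : ℝ) (N₁ : E → ℝ) (u u' : ℝ → E) : ℝ :=
  sSup ((fun t : ℝ => t ^ (1 - μ) * (‖u' t‖ + N₁ (u t))) '' Ioc 0 T)

/-- The norm of `𝔼_{0,μ}([0,T]) = BC_{1-μ}([0,T],E₀)`. -/
noncomputable def normE0 (μ T : ℝ) (u : ℝ → E) : ℝ :=
  sSup ((fun t : ℝ => t ^ (1 - μ) * ‖u t‖) '' Ioc 0 T)

/-- The norm of `C([0,T],X)` for the generalized norm `N`. -/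
noncomputable def normC (T : ℝ) (N : E → ℝ) (u : ℝ → E) : ℝ :=
  sSup ((fun t : ℝ => N (u t)) '' Icc 0 T)

/-- `(S, N)` is a Banach space continuously embedded in the ambient space `E`. -/
structure IsBanachIn (S : Set E) (N : E → ℝ) : Prop where
  subspace : ∃ p : Submodule ℝ E, S = (p : Set E)
  nonneg : ∀ x, 0 ≤ N x
  norm_zero : N 0 = 0
  add_le : ∀ x y, N (x + y) ≤ N x + N y
  smul_eq : ∀ (c : ℝ) (x : E), N (c • x) = |c| * N x
  eq_zero : ∀ x ∈ S, N x = 0 → x = 0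
  embed : ∃ C > 0, ∀ x ∈ S, ‖x‖ ≤ C * N x
  complete : ∀ f : ℕ → E, (∀ n, f n ∈ S) →
      (∀ ε > 0, ∃ n₀ : ℕ, ∀ p ≥ n₀, ∀ q ≥ n₀, N (f p - f q) < ε) →
      ∃ x ∈ S, ∀ ε > 0, ∃ n₀ : ℕ, ∀ n ≥ n₀, N (f n - x) < ε

/-- `V` is an open subset of the space with carrier `S` and norm `N`. -/
def NOpenIn (S : Set E) (N : E → ℝ) (V : Set E) : Prop :=
  V ⊆ S ∧ ∀ x ∈ V, ∃ ε > 0, ∀ y ∈ S, N (y - x) < ε → y ∈ V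

/-- The boundary of `V` in the space with carrier `S` and norm `N`. -/
def NBoundary (S : Set E) (N : E → ℝ) (V : Set E) : Set E :=
  {y | y ∈ S ∧ (∀ ε > 0, ∃ v ∈ V, N (v - y) < ε) ∧ y ∉ V}

/-- A solution on `[0,T]` of the linear Cauchy problem `u̇ + B u = f`, `u(0) = x`,
in the class `𝔼_{1,μ}([0,T])` (with trace space norm `Nμ`). -/
def IsLinSol (μ T : ℝ) (S₁ : Set E) (N₁ Nμ : E → ℝ) (B : E →ₗ[ℝ] E)
    (f : ℝ → E) (x : E) (u u' : ℝ → E) : Prop :=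
  MemE1 μ T S₁ N₁ u u' ∧ NContOn Nμ u (Icc 0 T) ∧ u 0 = x ∧
    ∀ t ∈ Ioc (0:ℝ) T, u' t + B (u t) = f t

/-- `B ∈ ℳ_μ(E₁, E₀)`: `B` is bounded from `E₁` to `E₀` and the pair
`(𝔼_{1,μ}, 𝔼_{0,μ})` is a pair of maximal regularity for `B`. -/
def MaxReg (μ : ℝ) (S₁ Sμ : Set E) (N₁ Nμ : E → ℝ) (B : E →ₗ[ℝ] E) : Prop :=
  (∃ C : ℝ, ∀ x ∈ S₁, ‖B x‖ ≤ C * N₁ x) ∧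
    ∀ T > 0, ∀ f : ℝ → E, MemBC μ T univ (fun x => ‖x‖) f → ∀ x ∈ Sμ,
      (∃ u u' : ℝ → E, IsLinSol μ T S₁ N₁ Nμ B f x u u') ∧
      ∀ u₁ u₁' u₂ u₂' : ℝ → E, IsLinSol μ T S₁ N₁ Nμ B f x u₁ u₁' →
        IsLinSol μ T S₁ N₁ Nμ B f x u₂ u₂' → ∀ t ∈ Icc (0:ℝ) T, u₁ t = u₂ t

/-- Hypothesis (H1): `A x ∈ ℳ_μ(E₁,E₀)` for `x ∈ V_μ` and `(A, F₁)` is locally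
Lipschitz from `V_μ` to `ℒ(E₁,E₀) × E₀`. -/
def HypH1 (μ : ℝ) (Vμ S₁ Sμ : Set E) (N₁ Nμ : E → ℝ)
    (A : E → E →ₗ[ℝ] E) (F₁ : E → E) : Prop :=
  (∀ x ∈ Vμ, MaxReg μ S₁ Sμ N₁ Nμ (A x)) ∧
    ∀ x₀ ∈ Vμ, ∃ r > 0, ∃ L > 0, ∀ x₁ ∈ Vμ, ∀ x₂ ∈ Vμ,
      Nμ (x₁ - x₀) ≤ r → Nμ (x₂ - x₀) ≤ r →
        (∀ z ∈ S₁, ‖A x₁ z - A x₂ z‖ ≤ L * Nμ (x₁ - x₂) * N₁ z) ∧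
        ‖F₁ x₁ - F₁ x₂‖ ≤ L * Nμ (x₁ - x₂)

/-- Hypothesis (H2): the structural condition on `F₂ : V_μ ∩ E_β → E₀`. -/
def HypH2 (μ β : ℝ) (Vμ Sβ : Set E) (Nμ Nβ : E → ℝ) (m : ℕ)
    (βj ρj : Fin m → ℝ) (Nbj : Fin m → E → ℝ) (F₂ : E → E) : Prop :=
  β ∈ Ioo μ 1 ∧ (∀ j, βj j ∈ Icc μ β) ∧ (∀ j, 0 ≤ ρj j) ∧
    (∀ j, (ρj j * (β - μ) + (βj j - μ)) / (1 - μ) ≤ 1) ∧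
    ∀ x₀ ∈ Vμ, ∀ R > 0, ∃ C > 0, ∀ x₁ ∈ Vμ ∩ Sβ, ∀ x₂ ∈ Vμ ∩ Sβ,
      Nμ (x₁ - x₀) ≤ R → Nμ (x₂ - x₀) ≤ R →
      ‖F₂ x₁ - F₂ x₂‖ ≤ C * ∑ j, (1 + Nβ x₁ ^ ρj j + Nβ x₂ ^ ρj j) * Nbj j (x₁ - x₂)

/-- Structural facts about the continuous interpolation scale
`E₁ ⊆ E_β ⊆ E_{β_j} ⊆ E_μ ⊆ E₀` (all true of `E_θ = (E₀,E₁)⁰_{θ,∞}`). -/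
structure ScaleSetting (μ β : ℝ) (S₁ Sμ Sβ : Set E) (N₁ Nμ Nβ : E → ℝ) (m : ℕ)
    (βj : Fin m → ℝ) (Sbj : Fin m → Set E) (Nbj : Fin m → E → ℝ) : Prop where
  banach₁ : IsBanachIn S₁ N₁
  banachμ : IsBanachIn Sμ Nμ
  banachβ : IsBanachIn Sβ Nβ
  banachbj : ∀ j, IsBanachIn (Sbj j) (Nbj j)
  incl₁β : S₁ ⊆ Sβ
  inclβbj : ∀ j, Sβ ⊆ Sbj j
  inclbjμ : ∀ j, Sbj j ⊆ Sμ
  dense₁₀ : ∀ x : E, ∀ ε > 0, ∃ y ∈ S₁, ‖x - y‖ < ε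
  dense₁μ : ∀ x ∈ Sμ, ∀ ε > 0, ∃ y ∈ S₁, Nμ (x - y) < ε
  embedβ₁ : ∃ C > 0, ∀ x ∈ S₁, Nβ x ≤ C * N₁ x
  embedbjβ : ∀ j, ∃ C > 0, ∀ x ∈ Sβ, Nbj j x ≤ C * Nβ x
  embedμbj : ∀ j, ∃ C > 0, ∀ x ∈ Sbj j, Nμ x ≤ C * Nbj j x
  interpβ : ∃ c ≥ 1, ∀ x ∈ S₁,
      Nβ x ≤ c * Nμ x ^ (1 - (β - μ) / (1 - μ)) * N₁ x ^ ((β - μ) / (1 - μ))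
  interpbj : ∀ j, ∃ c ≥ 1, ∀ x ∈ S₁,
      Nbj j x ≤ c * Nμ x ^ (1 - (βj j - μ) / (1 - μ)) * N₁ x ^ ((βj j - μ) / (1 - μ))

/-- A solution of the quasilinear problem (QE) on `[0,T]`, in the class
`𝔼_{1,ν}([0,T])` with trace space norm `Nν`. -/
def IsQSol (ν T : ℝ) (Vμ S₁ : Set E) (N₁ Nν : E → ℝ)
    (A : E → E →ₗ[ℝ] E) (F₁ F₂ : E → E) (x : E) (u u' : ℝ → E) : Prop :=
  MemE1 ν T S₁ N₁ u u' ∧ NContOn Nν u (Icc 0 T) ∧ u 0 = x ∧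
    (∀ t ∈ Icc (0:ℝ) T, u t ∈ Vμ) ∧
    ∀ t ∈ Ioc (0:ℝ) T, u' t + A (u t) (u t) = F₁ (u t) + F₂ (u t)

/-- A maximal solution of (QE), defined on the maximal right-open interval
`[0, tp)` with `tp ∈ (0,∞]`. -/
def IsMaxSol (μ : ℝ) (Vμ S₁ : Set E) (N₁ Nμ : E → ℝ)
    (A : E → E →ₗ[ℝ] E) (F₁ F₂ : E → E) (x : E) (u u' : ℝ → E) (tp : ℝ≥0∞) : Prop :=
  0 < tp ∧
    (∀ T : ℝ, 0 < T → ENNReal.ofReal T < tp →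
      IsQSol μ T Vμ S₁ N₁ Nμ A F₁ F₂ x u u') ∧
    ∀ T : ℝ, 0 < T → ∀ v v' : ℝ → E, IsQSol μ T Vμ S₁ N₁ Nμ A F₁ F₂ x v v' →
      ENNReal.ofReal T < tp ∧ ∀ t ∈ Icc (0:ℝ) T, v t = u t

/-- `ustar` is a stable equilibrium of (QE) in the topology of the space
with carrier `Sν` and norm `Nν`. -/
def StableIn (μ : ℝ) (Vμ S₁ Sν : Set E) (N₁ Nμ Nν : E → ℝ)
    (A : E → E →ₗ[ℝ] E) (F₁ F₂ : E → E) (ustar : E) : Prop :=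
  ∀ ε > 0, ∃ δ > 0, ∀ x₀ ∈ Vμ ∩ Sν, Nν (x₀ - ustar) < δ →
    ∀ (u u' : ℝ → E) (tp : ℝ≥0∞), IsMaxSol μ Vμ S₁ N₁ Nμ A F₁ F₂ x₀ u u' tp →
      tp = ⊤ ∧ ∀ t : ℝ, 0 ≤ t → Nν (u t - ustar) < ε

end QPE

/-!
Hypothesis (H2), anchored at the point `a = v(T)` of the ball, and the interpolation inequalities
give the linear growth bound `‖F₂ z‖ ≤ K (1 + ‖z‖_{E₁})` on `V_μ ∩ E₁ ∩ B̄_{E_μ}(x₀, ε₀)`: there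
`‖·‖_{E_μ}` is bounded, so `‖z‖_{E_β}^{ρ_j} ‖z - a‖_{E_{β_j}}` grows at most like
`‖z‖_{E₁}^{ρ_j α + α_j}`, and `ρ_j α + α_j ≤ 1`. Multiplied by `t^{1-μ}`, this reduces (b) to the
corresponding properties of `t^{1-μ} ‖v(t)‖_{E₁}`, and (c) follows from the vanishing in (b).
For (a), the embeddings `E₁ ↪ E_β ↪ E_{β_j}` make `F₂` Lipschitz from `E₁` on `E₁`-bounded
parts of the ball.
-/

namespace QPE

open Topology

variable {E : Type*} [NormedAddCommGroup E]
  {μ β : ℝ} {S₁ Sμ Sβ Vμ : Set E} {N₁ Nμ Nβ : E → ℝ} {m : ℕ} {βj ρj : Fin m → ℝ}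
  {Sbj : Fin m → Set E} {Nbj : Fin m → E → ℝ} {F₂ : E → E} {x₀ : E} {R : ℝ}

def NClosedBall (S : Set E) (N : E → ℝ) (x : E) (R : ℝ) : Set E :=
  {y | y ∈ S ∧ N (y - x) ≤ R}

theorem one_add_mul_le_of_le_rpow {w X Y A B b q r : ℝ} (hw : 1 ≤ w) (hA : 0 ≤ A) (hB : 0 ≤ B)
    (hb : 0 ≤ b) (hXA : X ≤ A * w ^ q) (hY : 0 ≤ Y) (hYB : Y ≤ B * w ^ r) (hq : 0 ≤ q)
    (hqr : q + r ≤ 1) :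
    (1 + X + b) * Y ≤ (1 + A + b) * B * w := by
  have hwq : 1 ≤ w ^ q := Real.one_le_rpow hw hq
  calc (1 + X + b) * Y ≤ (1 + A + b) * w ^ q * (B * w ^ r) := by
        gcongr
        nlinarith
    _ = (1 + A + b) * B * w ^ (q + r) := by
        rw [Real.rpow_add (by linarith)]; ring
    _ ≤ (1 + A + b) * B * w := by
        gcongr; exact Real.rpow_le_self_of_one_le hw hqr

theorem exists_le_mul_rpow_of_interp {X : Type*} {S₁ : Set X} {N Nμ N₁ : X → ℝ} {θ P : ℝ}
    (hNμ : ∀ x, 0 ≤ Nμ x) (hN₁ : ∀ x, 0 ≤ N₁ x) (hθ : 0 ≤ θ) (hθ1 : θ ≤ 1) (hP : 0 ≤ P)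
    (hinterp : ∃ c ≥ 1, ∀ x ∈ S₁, N x ≤ c * Nμ x ^ (1 - θ) * N₁ x ^ θ) :
    ∃ A ≥ 0, ∀ x ∈ S₁, Nμ x ≤ P → ∀ w, N₁ x ≤ w → N x ≤ A * w ^ θ := by
  obtain ⟨c, hc, hc_interp⟩ := hinterp
  have hc0 : 0 ≤ c := by linarith
  refine ⟨c * P ^ (1 - θ), by positivity, fun x hx hxP w hxw => (hc_interp x hx).trans ?_⟩
  have := hN₁ x
  have := hNμ x
  gcongr

theorem MemBC.of_norm_le_mul_one_add {μ T K : ℝ} {S : Set E} {N : E → ℝ} {u g : ℝ → E}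
    (hμ : μ < 1) (hT : 0 < T) (hu : MemBC μ T S N u) (hg : NContOn (fun x => ‖x‖) g (Ioc 0 T))
    (hK : 0 ≤ K) (hgu : ∀ t ∈ Ioc (0:ℝ) T, ‖g t‖ ≤ K * (1 + N (u t))) :
    MemBC μ T univ (fun x => ‖x‖) g := by
  obtain ⟨-, -, ⟨M, hM⟩, hu0⟩ := hu
  have hbound : ∀ t ∈ Ioc (0:ℝ) T,
      t ^ (1 - μ) * ‖g t‖ ≤ K * (t ^ (1 - μ) + t ^ (1 - μ) * N (u t)) := fun t ht =>
    calc t ^ (1 - μ) * ‖g t‖ ≤ t ^ (1 - μ) * (K * (1 + N (u t))) :=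
          mul_le_mul_of_nonneg_left (hgu t ht) (Real.rpow_nonneg ht.1.le _)
      _ = K * (t ^ (1 - μ) + t ^ (1 - μ) * N (u t)) := by ring
  refine ⟨fun _ _ => mem_univ _, hg, ⟨K * (T ^ (1 - μ) + M), fun t ht => ?_⟩, ?_⟩
  · exact (hbound t ht).trans <| mul_le_mul_of_nonneg_left
      (add_le_add (Real.rpow_le_rpow ht.1.le ht.2 (by linarith)) (hM t ht)) hK
  · have hpow : Tendsto (fun t : ℝ => t ^ (1 - μ)) (𝓝[>] 0) (𝓝 0) := by
      have := (Real.continuousAt_rpow_const 0 (1 - μ) (Or.inr (by linarith))).tendsto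
      rw [Real.zero_rpow (by linarith)] at this
      exact this.mono_left nhdsWithin_le_nhds
    refine tendsto_of_tendsto_of_tendsto_of_le_of_le' tendsto_const_nhds
      (by simpa using (hpow.add hu0).const_mul K) ?_ ?_
    · filter_upwards [self_mem_nhdsWithin] with t ht
      exact mul_nonneg (Real.rpow_nonneg (le_of_lt ht) _) (norm_nonneg _)
    · filter_upwards [Ioc_mem_nhdsGT hT] with t ht using hbound t ht

theorem tendsto_normE0_nhdsGT_zero {μ : ℝ} {u : ℝ → E}
    (hu : Tendsto (fun t : ℝ => t ^ (1 - μ) * ‖u t‖) (𝓝[>] 0) (𝓝 0)) :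
    Tendsto (fun T => normE0 μ T u) (𝓝[>] 0) (𝓝 0) := by
  refine tendsto_order.2 ⟨fun a ha => Eventually.of_forall fun T => ha.trans_le ?_, fun b hb => ?_⟩
  · refine Real.sSup_nonneg ?_
    rintro _ ⟨t, ht, rfl⟩
    exact mul_nonneg (Real.rpow_nonneg ht.1.le _) (norm_nonneg _)
  · obtain ⟨δ, hδ, hsmall⟩ :=
      mem_nhdsGT_iff_exists_Ioo_subset.1 (hu.eventually (gt_mem_nhds (half_pos hb)))
    filter_upwards [Ioo_mem_nhdsGT hδ] with T hT
    refine (Real.sSup_le ?_ (half_pos hb).le).trans_lt (half_lt_self hb)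
    rintro _ ⟨t, ht, rfl⟩
    exact (hsmall ⟨ht.1, ht.2.trans_lt hT.2⟩).le

theorem HypH2.exponent_mem_Icc (hH2 : HypH2 μ β Vμ Sβ Nμ Nβ m βj ρj Nbj F₂) :
    (β - μ) / (1 - μ) ∈ Icc (0:ℝ) 1 := by
  obtain ⟨⟨hμβ, hβ1⟩, -⟩ := hH2
  have h1μ : 0 < 1 - μ := by linarith
  exact ⟨div_nonneg (by linarith) h1μ.le, (div_le_one h1μ).2 (by linarith)⟩

theorem HypH2.exponent_j_mem_Icc (hH2 : HypH2 μ β Vμ Sβ Nμ Nβ m βj ρj Nbj F₂) (j : Fin m) :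
    (βj j - μ) / (1 - μ) ∈ Icc (0:ℝ) 1 ∧
      (β - μ) / (1 - μ) * ρj j + (βj j - μ) / (1 - μ) ≤ 1 := by
  obtain ⟨⟨hμβ, hβ1⟩, hβj, -, hexp, -⟩ := hH2
  have h1μ : 0 < 1 - μ := by linarith
  exact ⟨⟨div_nonneg (by linarith [(hβj j).1]) h1μ.le,
    (div_le_one h1μ).2 (by linarith [(hβj j).2])⟩,
    by simpa [add_div, mul_div_assoc, mul_comm] using hexp j⟩

section NormedSpace

variable [NormedSpace ℝ E]

namespace IsBanachIn

variable {S : Set E} {N : E → ℝ}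

theorem sub_mem (h : IsBanachIn S N) {x y : E} (hx : x ∈ S) (hy : y ∈ S) : x - y ∈ S := by
  obtain ⟨p, rfl⟩ := h.subspace
  exact p.sub_mem hx hy

theorem le_sub_add (h : IsBanachIn S N) (x y : E) : N x ≤ N (x - y) + N y := by
  simpa using h.add_le (x - y) y

theorem sub_le (h : IsBanachIn S N) (x y : E) : N (x - y) ≤ N x + N y := by
  have hneg : N (-y) = N y := by simpa using h.smul_eq (-1) y
  simpa [sub_eq_add_neg, hneg] using h.add_le x (-y)

end IsBanachIn

theorem NContOn.norm_comp_of_lipschitzOn {S U : Set E} {N : E → ℝ} {s : Set ℝ} {u : ℝ → E}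
    {g : E → E} (hN : IsBanachIn S N) (hu : NContOn N u s) (huU : ∀ t ∈ s, u t ∈ U)
    (hg : ∀ r ≥ 0, ∃ L ≥ 0, ∀ z ∈ U, ∀ z' ∈ U, N z ≤ r → N z' ≤ r →
      ‖g z - g z'‖ ≤ L * N (z - z')) :
    NContOn (fun x => ‖x‖) (fun t => g (u t)) s := by
  intro t ht ε hε
  obtain ⟨L, hL, hLip⟩ := hg (N (u t) + 1) (by linarith [hN.nonneg (u t)])
  obtain ⟨δ, hδ, hδu⟩ := hu t ht (min 1 (ε / (L + 1))) (lt_min one_pos (by positivity))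
  refine ⟨δ, hδ, fun t' ht' htt' => ?_⟩
  have hclose := hδu t' ht' htt'
  have hut' : N (u t') ≤ N (u t) + 1 :=
    (hN.le_sub_add _ _).trans (by linarith [min_le_left 1 (ε / (L + 1))])
  calc ‖g (u t') - g (u t)‖ ≤ L * N (u t' - u t) :=
        hLip _ (huU t' ht') _ (huU t ht) hut' (by linarith)
    _ ≤ L * (ε / (L + 1)) := by gcongr; exact hclose.le.trans (min_le_right _ _)
    _ < ε := by rw [mul_div_assoc', div_lt_iff₀ (by linarith)]; nlinarith

theorem HypH2.exists_lipschitzOn_N₁_le (hH2 : HypH2 μ β Vμ Sβ Nμ Nβ m βj ρj Nbj F₂)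
    (hscale : ScaleSetting μ β S₁ Sμ Sβ N₁ Nμ Nβ m βj Sbj Nbj) (hx₀ : x₀ ∈ Vμ) (hR : 0 < R)
    {r : ℝ} (hr : 0 ≤ r) :
    ∃ L ≥ 0, ∀ z ∈ NClosedBall (Vμ ∩ S₁) Nμ x₀ R, ∀ z' ∈ NClosedBall (Vμ ∩ S₁) Nμ x₀ R,
      N₁ z ≤ r → N₁ z' ≤ r → ‖F₂ z - F₂ z'‖ ≤ L * N₁ (z - z') := by
  obtain ⟨-, -, hρ, -, hlip⟩ := hH2
  obtain ⟨C, hC, hC_lip⟩ := hlip x₀ hx₀ R hR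
  obtain ⟨Cβ, hCβ, hCβ_embed⟩ := hscale.embedβ₁
  choose Cj hCj hCj_embed using hscale.embedbjβ
  refine ⟨C * ∑ j, (1 + 2 * (Cβ * r) ^ ρj j) * (Cj j * Cβ),
    mul_nonneg hC.le (Finset.sum_nonneg fun j _ => by have := hCj j; positivity), ?_⟩
  rintro z ⟨⟨hzV, hzS⟩, hzR⟩ z' ⟨⟨hz'V, hz'S⟩, hz'R⟩ hzr hz'r
  have hdiff := hscale.banach₁.sub_mem hzS hz'S
  have hpow_le : ∀ y ∈ S₁, N₁ y ≤ r → ∀ j, Nβ y ^ ρj j ≤ (Cβ * r) ^ ρj j := fun y hy hyr j =>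
    Real.rpow_le_rpow (hscale.banachβ.nonneg y) ((hCβ_embed y hy).trans (by gcongr)) (hρ j)
  calc ‖F₂ z - F₂ z'‖ ≤ C * ∑ j, (1 + Nβ z ^ ρj j + Nβ z' ^ ρj j) * Nbj j (z - z') :=
        hC_lip z ⟨hzV, hscale.incl₁β hzS⟩ z' ⟨hz'V, hscale.incl₁β hz'S⟩ hzR hz'R
    _ ≤ C * ∑ j, (1 + 2 * (Cβ * r) ^ ρj j) * (Cj j * Cβ * N₁ (z - z')) := by
        refine mul_le_mul_of_nonneg_left (Finset.sum_le_sum fun j _ => ?_) hC.le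
        refine mul_le_mul ?_ ?_ ((hscale.banachbj j).nonneg _) (by positivity)
        · linarith [hpow_le z hzS hzr j, hpow_le z' hz'S hz'r j]
        · rw [mul_assoc]
          exact (hCj_embed j _ (hscale.incl₁β hdiff)).trans
            (mul_le_mul_of_nonneg_left (hCβ_embed _ hdiff) (hCj j).le)
    _ = (C * ∑ j, (1 + 2 * (Cβ * r) ^ ρj j) * (Cj j * Cβ)) * N₁ (z - z') := by
        simp only [Finset.mul_sum, Finset.sum_mul, mul_assoc]

theorem HypH2.exists_norm_sub_le_mul (hH2 : HypH2 μ β Vμ Sβ Nμ Nβ m βj ρj Nbj F₂)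
    (hscale : ScaleSetting μ β S₁ Sμ Sβ N₁ Nμ Nβ m βj Sbj Nbj) (hx₀ : x₀ ∈ Vμ) (hR : 0 < R)
    {a : E} (ha : a ∈ NClosedBall (Vμ ∩ S₁) Nμ x₀ R) :
    ∃ K ≥ 0, ∀ z ∈ NClosedBall (Vμ ∩ S₁) Nμ x₀ R, ‖F₂ z - F₂ a‖ ≤ K * (1 + N₁ z + N₁ a) := by
  have hα := hH2.exponent_mem_Icc
  have hαj := hH2.exponent_j_mem_Icc
  obtain ⟨-, -, hρ, -, hlip⟩ := hH2
  obtain ⟨C, hC, hC_lip⟩ := hlip x₀ hx₀ R hR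
  obtain ⟨⟨haV, haS⟩, haR⟩ := ha
  have hN₁ := hscale.banach₁
  have hNμ := hscale.banachμ
  have hNβa := hscale.banachβ.nonneg a
  have hNμ_le : ∀ y ∈ NClosedBall (Vμ ∩ S₁) Nμ x₀ R, Nμ y ≤ Nμ x₀ + R := fun y hy =>
    (hNμ.le_sub_add y x₀).trans (by linarith [hy.2])
  have hP : 0 ≤ Nμ x₀ + R := by linarith [hNμ.nonneg x₀]
  obtain ⟨A, hA, hA_le⟩ := exists_le_mul_rpow_of_interp hNμ.nonneg hN₁.nonneg
    hα.1 hα.2 hP hscale.interpβ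
  choose B hB hB_le using fun j => exists_le_mul_rpow_of_interp hNμ.nonneg hN₁.nonneg
    (hαj j).1.1 (hαj j).1.2 (by linarith : 0 ≤ 2 * (Nμ x₀ + R)) (hscale.interpbj j)
  refine ⟨C * ∑ j, (1 + A ^ ρj j + Nβ a ^ ρj j) * B j,
    mul_nonneg hC.le (Finset.sum_nonneg fun j _ => by have := hB j; positivity), ?_⟩
  rintro z ⟨⟨hzV, hzS⟩, hzR⟩
  have hw : 1 ≤ 1 + N₁ z + N₁ a := by linarith [hN₁.nonneg z, hN₁.nonneg a]
  have hterm : ∀ j, (1 + Nβ z ^ ρj j + Nβ a ^ ρj j) * Nbj j (z - a) ≤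
      (1 + A ^ ρj j + Nβ a ^ ρj j) * B j * (1 + N₁ z + N₁ a) := fun j => by
    have hNβz : Nβ z ^ ρj j ≤ A ^ ρj j * (1 + N₁ z + N₁ a) ^ ((β - μ) / (1 - μ) * ρj j) := by
      rw [Real.rpow_mul (by linarith), ← Real.mul_rpow hA (by positivity)]
      refine Real.rpow_le_rpow (hscale.banachβ.nonneg z) ?_ (hρ j)
      exact hA_le z hzS (hNμ_le z ⟨⟨hzV, hzS⟩, hzR⟩) _ (by linarith [hN₁.nonneg a])
    have hNbj := hB_le j _ (hN₁.sub_mem hzS haS) ((hNμ.sub_le z a).trans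
      (by linarith [hNμ_le z ⟨⟨hzV, hzS⟩, hzR⟩, hNμ_le a ⟨⟨haV, haS⟩, haR⟩]))
      (1 + N₁ z + N₁ a) ((hN₁.sub_le z a).trans (by linarith))
    exact one_add_mul_le_of_le_rpow hw (by positivity) (hB j) (by positivity) hNβz
      ((hscale.banachbj j).nonneg _) hNbj (mul_nonneg hα.1 (hρ j)) (hαj j).2
  calc ‖F₂ z - F₂ a‖ ≤ C * ∑ j, (1 + Nβ z ^ ρj j + Nβ a ^ ρj j) * Nbj j (z - a) :=
        hC_lip z ⟨hzV, hscale.incl₁β hzS⟩ a ⟨haV, hscale.incl₁β haS⟩ hzR haR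
    _ ≤ C * ∑ j, (1 + A ^ ρj j + Nβ a ^ ρj j) * B j * (1 + N₁ z + N₁ a) :=
        mul_le_mul_of_nonneg_left (Finset.sum_le_sum fun j _ => hterm j) hC.le
    _ = (C * ∑ j, (1 + A ^ ρj j + Nβ a ^ ρj j) * B j) * (1 + N₁ z + N₁ a) := by
        rw [mul_assoc, Finset.sum_mul]

theorem HypH2.exists_norm_le_mul_one_add (hH2 : HypH2 μ β Vμ Sβ Nμ Nβ m βj ρj Nbj F₂)
    (hscale : ScaleSetting μ β S₁ Sμ Sβ N₁ Nμ Nβ m βj Sbj Nbj) (hx₀ : x₀ ∈ Vμ) (hR : 0 < R)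
    {a : E} (ha : a ∈ NClosedBall (Vμ ∩ S₁) Nμ x₀ R) :
    ∃ K ≥ 0, ∀ z ∈ NClosedBall (Vμ ∩ S₁) Nμ x₀ R, ‖F₂ z‖ ≤ K * (1 + N₁ z) := by
  obtain ⟨K, hK, hK_le⟩ := hH2.exists_norm_sub_le_mul hscale hx₀ hR ha
  have hN₁a := hscale.banach₁.nonneg a
  refine ⟨‖F₂ a‖ + K * (1 + N₁ a), by positivity, fun z hz => ?_⟩
  have hN₁z := hscale.banach₁.nonneg z
  calc ‖F₂ z‖ ≤ ‖F₂ a‖ + ‖F₂ z - F₂ a‖ := norm_le_insert' _ _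
    _ ≤ ‖F₂ a‖ + K * (1 + N₁ z + N₁ a) := by gcongr; exact hK_le z hz
    _ ≤ (‖F₂ a‖ + K * (1 + N₁ a)) * (1 + N₁ z) := by
        nlinarith [mul_nonneg (norm_nonneg (F₂ a)) hN₁z, mul_nonneg hK (mul_nonneg hN₁a hN₁z)]

end NormedSpace

theorem F₂_composition_general
    {E : Type*} [NormedAddCommGroup E] [NormedSpace ℝ E]
    (μ β : ℝ) (hμ : μ ∈ Ioo (0:ℝ) 1)
    (S₁ Sμ Sβ Vμ : Set E) (N₁ Nμ Nβ : E → ℝ) (m : ℕ)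
    (βj ρj : Fin m → ℝ) (Sbj : Fin m → Set E) (Nbj : Fin m → E → ℝ)
    (F₂ : E → E)
    (hscale : ScaleSetting μ β S₁ Sμ Sβ N₁ Nμ Nβ m βj Sbj Nbj)
    (hH2 : HypH2 μ β Vμ Sβ Nμ Nβ m βj ρj Nbj F₂)
    (x₀ : E) (hx₀ : x₀ ∈ Vμ) (ε₀ : ℝ) (hε₀ : 0 < ε₀)
    (hball : ∀ y ∈ Sμ, Nμ (y - x₀) ≤ ε₀ → y ∈ Vμ)
    (T : ℝ) (hT : 0 < T) (v v' : ℝ → E)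
    (hv : MemE1 μ T S₁ N₁ v v')
    (hvball : ∀ t ∈ Icc (0:ℝ) T, v t ∈ Sμ ∧ Nμ (v t - x₀) ≤ ε₀) :
    -- (a) `t ↦ F₂(v(t))` is continuous from `(0,T]` into `E₀`
    NContOn (fun x => ‖x‖) (fun t => F₂ (v t)) (Ioc 0 T) ∧
    -- (b) `F₂ ∘ v ∈ 𝔼_{0,μ}([0,T]) = BC_{1-μ}([0,T],E₀)`
    MemBC μ T univ (fun x => ‖x‖) (fun t => F₂ (v t)) ∧
    -- (c) `‖F₂ ∘ v‖_{𝔼_{0,μ}([0,T'])} → 0` as `T' → 0⁺`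
    Tendsto (fun T' : ℝ => normE0 μ T' (fun t => F₂ (v t)))
      (nhdsWithin 0 (Ioi 0)) (nhds 0) := by
  have hv₁ : MemBC μ T S₁ N₁ v := hv.2.2.2
  have hv_ball : ∀ t ∈ Ioc (0:ℝ) T, v t ∈ NClosedBall (Vμ ∩ S₁) Nμ x₀ ε₀ := fun t ht =>
    have hvt := hvball t (Ioc_subset_Icc_self ht)
    ⟨⟨hball _ hvt.1 hvt.2, hv₁.1 t ht⟩, hvt.2⟩
  have hcont : NContOn (fun x => ‖x‖) (fun t => F₂ (v t)) (Ioc 0 T) :=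
    hv₁.2.1.norm_comp_of_lipschitzOn hscale.banach₁ hv_ball
      fun _ hr => hH2.exists_lipschitzOn_N₁_le hscale hx₀ hε₀ hr
  obtain ⟨K, hK, hgrowth⟩ :=
    hH2.exists_norm_le_mul_one_add hscale hx₀ hε₀ (hv_ball T ⟨hT, le_rfl⟩)
  have hmem : MemBC μ T univ (fun x => ‖x‖) (fun t => F₂ (v t)) :=
    hv₁.of_norm_le_mul_one_add hμ.2 hT hcont hK fun t ht => hgrowth _ (hv_ball t ht)
  exact ⟨hcont, hmem, tendsto_normE0_nhdsGT_zero hmem.2.2.2⟩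

/-- **Claim 2 in the proof of Theorem 2.2** (the part concerning `F₂`): for
`v ∈ 𝔼_{1,μ}([0,T])` with values in `B̄_{E_μ}(x₀,ε₀) ⊆ V_μ`, the composition
`F₂ ∘ v` is continuous into `E₀` on `(0,T]`, belongs to `𝔼_{0,μ}([0,T])`, and
its `𝔼_{0,μ}([0,T'])`-norm tends to `0` as `T' → 0⁺`. -/
theorem F₂_composition
    {E : Type*} [NormedAddCommGroup E] [NormedSpace ℝ E] [CompleteSpace E]
    (μ β : ℝ) (hμ : μ ∈ Ioo (0:ℝ) 1)
    (S₁ Sμ Sβ Vμ : Set E) (N₁ Nμ Nβ : E → ℝ) (m : ℕ)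
    (βj ρj : Fin m → ℝ) (Sbj : Fin m → Set E) (Nbj : Fin m → E → ℝ)
    (F₂ : E → E)
    (hscale : ScaleSetting μ β S₁ Sμ Sβ N₁ Nμ Nβ m βj Sbj Nbj)
    (hopen : NOpenIn Sμ Nμ Vμ)
    (hH2 : HypH2 μ β Vμ Sβ Nμ Nβ m βj ρj Nbj F₂)
    (x₀ : E) (hx₀ : x₀ ∈ Vμ) (ε₀ : ℝ) (hε₀ : 0 < ε₀)
    (hball : ∀ y ∈ Sμ, Nμ (y - x₀) ≤ ε₀ → y ∈ Vμ)
    (T : ℝ) (hT : 0 < T) (v v' : ℝ → E)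
    (hv : MemE1 μ T S₁ N₁ v v')
    (hvball : ∀ t ∈ Icc (0:ℝ) T, v t ∈ Sμ ∧ Nμ (v t - x₀) ≤ ε₀) :
    -- (a) `t ↦ F₂(v(t))` is continuous from `(0,T]` into `E₀`
    NContOn (fun x => ‖x‖) (fun t => F₂ (v t)) (Ioc 0 T) ∧
    -- (b) `F₂ ∘ v ∈ 𝔼_{0,μ}([0,T]) = BC_{1-μ}([0,T],E₀)`
    MemBC μ T univ (fun x => ‖x‖) (fun t => F₂ (v t)) ∧
    -- (c) `‖F₂ ∘ v‖_{𝔼_{0,μ}([0,T'])} → 0` as `T' → 0⁺`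
    Tendsto (fun T' : ℝ => normE0 μ T' (fun t => F₂ (v t)))
      (nhdsWithin 0 (Ioi 0)) (nhds 0) :=
  F₂_composition_general μ β hμ S₁ Sμ Sβ Vμ N₁ Nμ Nβ m βj ρj Sbj Nbj F₂ hscale hH2 x₀ hx₀ ε₀ hε₀
    hball T hT v v' hv hvball

end QPE
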